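/- Let m ≥ 2, N ≥ 2, C ≥ 0, and let W : ℕ × ℕ → Prop be any predicate. Define Alice's valuations v_A^x for x ∈ {1,…,N} by v_A^x(0) = 0 and v_A^x(s) = C + 10x + 4sx + w(x,s) for s ≥ 1 (with w(x,s) = 1 if s > 1 and W(x,s), else 0), and Bob's valuations v_B^x by v_B^x(0) = 0 and v_B^x(s) = 10x + 4sx for s ≥ 1. Define the objective obj(a, b, (s_A, s_B)) for allocations s_A + s_B ≤ m by: obj = 2 if a > b and (s_A,s_B) = (m,0); obj = 2 if b > a and (s_A,s_B) = (1, m−1); obj = 2 if a = b, s_A ≥ 2, W(a, s_A) holds, and s_B = m − s_A; obj = 1 if a = b and (s_A,s_B) = (0,m); and obj = 0 otherwise. Let f : {1,…,N} × {1,…,N} → {(s_A,s_B) : s_A + s_B ≤ m} be a social-choice function such that: (i) for every fixed b, the map a ↦ (Alice's quantity in f(a,b)) is implementable for Alice with respect to the valuations v_A^a; (ii) for every fixed a, the map b ↦ (Bob's quantity in f(a,b)) is implementable for Bob with respect to the valuations v_B^b; and (iii) obj(a, b, f(a,b)) ≥ 1 for all a, b. Then obj(a, b, f(a,b)) = 2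 for all a, b ∈ {1,…,N}. -/
import Mathlib


open Classical

/-- Alice's `x`-th valuation in the separation construction. -/
noncomputable def vA (C : ℝ) (W : ℕ → ℕ → Prop) (x s : ℕ) : ℝ :=
  if s = 0 then 0
  else C + 10 * (x : ℝ) + 4 * (s : ℝ) * (x : ℝ) + (if 1 < s ∧ W x s then 1 else 0)

/-- Bob's `x`-th valuation in the separation construction. -/
noncomputable def vB (x s : ℕ) : ℝ :=
  if s = 0 then 0 else 10 * (x : ℝ) + 4 * (s : ℝ) * (x : ℝ)

/-- The objective function of the separation construction: value `2` for
welfare-maximizing allocations, value `1` for the allocation `(0, m)` when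
`a = b`, and `0` otherwise. -/
noncomputable def obj (m : ℕ) (W : ℕ → ℕ → Prop) (a b sA sB : ℕ) : ℝ :=
  if (b < a ∧ sA = m ∧ sB = 0) ∨ (a < b ∧ sA = 1 ∧ sB = m - 1) ∨
     (a = b ∧ 2 ≤ sA ∧ W a sA ∧ sB = m - sA) then 2
  else if a = b ∧ sA = 0 ∧ sB = m then 1
  else 0

/-- every social-choice function that is implementable for both
bidders and provides a finite approximation (objective value `≥ 1` everywhere)
must exactly optimize the objective (value `2` everywhere). -/
theorem implementable_finite_approx_must_optimize
    (m N : ℕ) (hm : 2 ≤ m) (hN : 2 ≤ N) (C : ℝ) (hC : 0 ≤ C)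
    (W : ℕ → ℕ → Prop)
    (f : ℕ → ℕ → ℕ × ℕ)
    (hfeas : ∀ a b : ℕ, 1 ≤ a → a ≤ N → 1 ≤ b → b ≤ N → (f a b).1 + (f a b).2 ≤ m)
    (hA : ∀ b : ℕ, 1 ≤ b → b ≤ N → ∃ P : ℕ → ℝ,
      ∀ a a' : ℕ, 1 ≤ a → a ≤ N → 1 ≤ a' → a' ≤ N →
        vA C W a ((f a' b).1) - P a' ≤ vA C W a ((f a b).1) - P a)
    (hB : ∀ a : ℕ, 1 ≤ a → a ≤ N → ∃ P : ℕ → ℝ,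
      ∀ b b' : ℕ, 1 ≤ b → b ≤ N → 1 ≤ b' → b' ≤ N →
        vB b ((f a b').2) - P b' ≤ vB b ((f a b).2) - P b)
    (happrox : ∀ a b : ℕ, 1 ≤ a → a ≤ N → 1 ≤ b → b ≤ N →
      1 ≤ obj m W a b (f a b).1 (f a b).2) :
    ∀ a b : ℕ, 1 ≤ a → a ≤ N → 1 ≤ b → b ≤ N →
      obj m W a b (f a b).1 (f a b).2 = 2 := by
  have key : ∀ a b : ℕ, 1 ≤ a → a ≤ N → 1 ≤ b → b ≤ N →
      ((b < a ∧ (f a b).1 = m ∧ (f a b).2 = 0) ∨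
       (a < b ∧ (f a b).1 = 1 ∧ (f a b).2 = m - 1) ∨
       (a = b ∧ 2 ≤ (f a b).1 ∧ W a (f a b).1 ∧ (f a b).2 = m - (f a b).1)) ∨
      (a = b ∧ (f a b).1 = 0 ∧ (f a b).2 = m) := by
    intro a b h1 h2 h3 h4
    have h := happrox a b h1 h2 h3 h4
    unfold obj at h
    split_ifs at h with hc1 hc2
    · exact Or.inl hc1
    · exact Or.inr hc2
    · linarith
  intro a b h1a haN h1b hbN
  rcases key a b h1a haN h1b hbN with h | ⟨hab, h0, hm'⟩
  · unfold obj; rw [if_pos h]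
  · exfalso
    subst hab
    by_cases h2a : 2 ≤ a
    · -- Alice case: compare a with a - 1
      have h1a' : 1 ≤ a - 1 := by omega
      have haN' : a - 1 ≤ N := by omega
      have hlt : a - 1 < a := by omega
      have hk := key (a - 1) a h1a' haN' h1a haN
      have hf1 : (f (a - 1) a).1 = 1 := by
        rcases hk with (⟨h, _⟩ | ⟨_, h, _⟩ | ⟨h, _⟩) | ⟨h, _⟩ <;> omega
      obtain ⟨P, hP⟩ := hA a h1a haN
      have i1 := hP a (a - 1) h1a haN h1a' haN'
      have i2 := hP (a - 1) a h1a' haN' h1a haN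
      rw [h0, hf1] at i1 i2
      have e0 : ∀ x : ℕ, vA C W x 0 = 0 := by intro x; simp [vA]
      have e1 : ∀ x : ℕ, vA C W x 1 = C + 10 * x + 4 * x := by
        intro x; simp [vA]
      simp only [e0, e1] at i1 i2
      have hc : (↑(a - 1) : ℝ) < (a : ℝ) := by exact_mod_cast hlt
      linarith
    · -- a = 1: Bob case, compare b = 1 with b = 2
      have ha1 : a = 1 := by omega
      subst ha1
      have hk := key 1 2 (by norm_num) haN (by norm_num) hN
      have hf2 : (f 1 2).2 = m - 1 := by
        rcases hk with (⟨h, _⟩ | ⟨_, _, h⟩ | ⟨h, _⟩) | ⟨h, _⟩ <;> omega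
      obtain ⟨P, hP⟩ := hB 1 (by norm_num) haN
      have i1 := hP 1 2 (by norm_num) haN (by norm_num) hN
      have i2 := hP 2 1 (by norm_num) hN (by norm_num) haN
      rw [hm', hf2] at i1 i2
      have hm0 : m ≠ 0 := by omega
      have hm1 : m - 1 ≠ 0 := by omega
      have hcast : ((m - 1 : ℕ) : ℝ) = (m : ℝ) - 1 := by
        rw [Nat.cast_sub (by omega)]; norm_num
      have em : ∀ x : ℕ, vB x m = 10 * x + 4 * m * x := by
        intro x; simp [vB, hm0]
      have em1 : ∀ x : ℕ, vB x (m - 1) = 10 * x + 4 * ((m : ℝ) - 1) * x := by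
        intro x; simp [vB, hm1, hcast]
      simp only [em, em1] at i1 i2
      push_cast at i1 i2
      linarith
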